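/- arXiv:2104.14283 — 3 statements merged into one kernel-verified Lean document; each statement's English description precedes it below -/
import Mathlib

section
/- In the abstract scalarization setting, for any μ, μ' ≥ 0, the minimal Lagrangian values satisfy |f(x*_μ) - f(x*_{μ'})| ≤ max(μ, μ') · |g(x*_μ) - g(x*_{μ'})|. -/
lemma abs_sub_le_max_mul_abs_sub_of_scalarized_le {a a' b b' μ μ' : ℝ}
    (hμ : 0 ≤ μ) (hμ' : 0 ≤ μ')
    (h : a + μ * b ≤ a' + μ * b') (h' : a' + μ' * b' ≤ a + μ' * b) :
    |a - a'| ≤ max μ μ' * |b - b'| := by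
  have hb : 0 ≤ |b - b'| := abs_nonneg _
  rw [abs_le]
  constructor
  · calc -(max μ μ' * |b - b'|) ≤ -(μ' * |b - b'|) := by
          gcongr; exact le_max_right _ _
      _ ≤ -(μ' * (b - b')) := by gcongr; exact le_abs_self _
      _ ≤ a - a' := by linarith
  · calc a - a' ≤ μ * (b' - b) := by linarith
      _ ≤ μ * |b - b'| := by gcongr; rw [abs_sub_comm]; exact le_abs_self _
      _ ≤ max μ μ' * |b - b'| := by gcongr; exact le_max_left _ _

/-- Quantitative monotonicity: the change in `f` along the minimizer curve is
controlled by `max(μ, μ')` times the change in `g`. -/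
theorem stmt_1 {S : Type*} (f g : S → ℝ) (xs : ℝ → S)
    (hopt : ∀ μ : ℝ, 0 ≤ μ → ∀ y : S, f (xs μ) + μ * g (xs μ) ≤ f y + μ * g y)
    (μ μ' : ℝ) (hμ : 0 ≤ μ) (hμ' : 0 ≤ μ') :
    |f (xs μ) - f (xs μ')| ≤ max μ μ' * |g (xs μ) - g (xs μ')| :=
  abs_sub_le_max_mul_abs_sub_of_scalarized_le hμ hμ' (hopt μ hμ (xs μ')) (hopt μ' hμ' (xs μ))
end

section
/- Uncertainty principle (abstract form): let S be a set, f, g : S → ℝ≥0, and x* : [0,∞] → S a curve of Lagrangian minimizers such that (i) for all μ ∈ [0,∞) and all y ∈ S, f(x*_μ) + μ g(x*_μ) ≤ f(y) + μ g(y); (ii) g(x*_∞) = inf_{y∈S} g(y); (iii) μ ↦ g(x*_μ) is continuous on [0,∞] (so the range of g along the curve is an interval); (iv) μ ↦ f(x*_μ) is continuous with f(x*_∞) = lim_{μ→∞} f(x*_μ); and (v) the infimum h := inf_{μ∈[0,∞]} f(x*_μ) g(x*_μ) is attained. Then every x̂ ∈ S satisfies f(x̂) g(x̂) ≥ h. 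-/
/-!
Every `y ∈ S` is weakly dominated, in both `f` and `g`, by a point of the extended curve
`μ ↦ x*_μ`, `μ ∈ [0,∞]`; the product bound then follows from nonnegativity. If
`g y ≥ g x*_0`, the point `x*_0` (the minimizer of `f`) dominates `y`. Otherwise `g y` lies in
`[g x*_∞, g x*_0)`: either it equals the minimum `g x*_∞`, and passing to the limit in the
Lagrangian inequalities gives `f x*_∞ ≤ f y`, or, by the intermediate value theorem, it is
attained as `g x*_μ` for a finite `μ`, and then Lagrangian optimality at `μ` gives
`f x*_μ ≤ f y`.
-/

open Filter Set

section Lagrangian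

variable {S : Type*} (f g : S → ℝ)

lemma le_of_lagrangian_le {μ : ℝ} (hμ : 0 ≤ μ) {x y : S}
    (hxy : f x + μ * g x ≤ f y + μ * g y) (hg : g y ≤ g x) : f x ≤ f y := by
  linarith [mul_le_mul_of_nonneg_left hg hμ]

variable {f g} (xs : ℝ → S) (xinf : S)

lemma le_of_tendsto_lagrangian
    (hopt : ∀ μ : ℝ, 0 ≤ μ → ∀ y : S, f (xs μ) + μ * g (xs μ) ≤ f y + μ * g y)
    (hginf : ∀ y : S, g xinf ≤ g y)
    (hflim : Tendsto (fun μ => f (xs μ)) atTop (nhds (f xinf)))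
    {y : S} (hy : g y = g xinf) : f xinf ≤ f y :=
  le_of_tendsto hflim <| (eventually_ge_atTop 0).mono fun μ hμ =>
    le_of_lagrangian_le f g hμ (hopt μ hμ y) (hy ▸ hginf _)

lemma exists_lagrangian_curve_dominates
    (hopt : ∀ μ : ℝ, 0 ≤ μ → ∀ y : S, f (xs μ) + μ * g (xs μ) ≤ f y + μ * g y)
    (hginf : ∀ y : S, g xinf ≤ g y)
    (hgcont : ContinuousOn (fun μ => g (xs μ)) (Ici 0))
    (hglim : Tendsto (fun μ => g (xs μ)) atTop (nhds (g xinf)))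
    (hflim : Tendsto (fun μ => f (xs μ)) atTop (nhds (f xinf))) (y : S) :
    (∃ μ : ℝ, 0 ≤ μ ∧ f (xs μ) ≤ f y ∧ g (xs μ) ≤ g y) ∨ (f xinf ≤ f y ∧ g xinf ≤ g y) := by
  rcases le_or_gt (g (xs 0)) (g y) with hy0 | hy0
  · exact .inl ⟨0, le_rfl, by simpa using hopt 0 le_rfl y, hy0⟩
  rcases (hginf y).eq_or_lt with hyinf | hyinf
  · exact .inr ⟨le_of_tendsto_lagrangian xs xinf hopt hginf hflim hyinf.symm, hginf y⟩
  obtain ⟨μ, hμ, hμy⟩ : g y ∈ (fun μ => g (xs μ)) '' Ici 0 :=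
    isPreconnected_Ici.intermediate_value_Ioc self_mem_Ici
      (le_principal_iff.mpr (Ici_mem_atTop 0)) hgcont hglim ⟨hyinf, hy0.le⟩
  exact .inl ⟨μ, hμ, le_of_lagrangian_le f g hμ (hopt μ hμ y) hμy.ge, hμy.le⟩

end Lagrangian

theorem stmt_3_general {S : Type*} (f g : S → ℝ) (xs : ℝ → S) (xinf : S)
    (hf : ∀ y : S, 0 ≤ f y) (hg : ∀ y : S, 0 ≤ g y)
    -- (i) Lagrangian optimality for every finite μ ≥ 0
    (hopt : ∀ μ : ℝ, 0 ≤ μ → ∀ y : S, f (xs μ) + μ * g (xs μ) ≤ f y + μ * g y)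
    -- (ii) g(x*_∞) minimizes g over S
    (hginf : ∀ y : S, g xinf ≤ g y)
    -- (iii) continuity of g along the curve on [0,∞], i.e. on [0,∞) and at ∞
    (hgcont : ContinuousOn (fun μ => g (xs μ)) (Set.Ici (0 : ℝ)))
    (hglim : Filter.Tendsto (fun μ => g (xs μ)) Filter.atTop (nhds (g xinf)))
    -- (iv) continuity of f along the curve on [0,∞], with f(x*_∞) the limit
    (hflim : Filter.Tendsto (fun μ => f (xs μ)) Filter.atTop (nhds (f xinf)))
    -- (v) the infimum h of the product over [0,∞] is attained
    (h : ℝ)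
    (hlb : (∀ μ : ℝ, 0 ≤ μ → h ≤ f (xs μ) * g (xs μ)) ∧ h ≤ f xinf * g xinf) :
    ∀ xhat : S, h ≤ f xhat * g xhat := by
  intro xhat
  rcases exists_lagrangian_curve_dominates xs xinf hopt hginf hgcont hglim hflim xhat with
    ⟨μ, hμ, hfμ, hgμ⟩ | ⟨hfxinf, hgxinf⟩
  · exact (hlb.1 μ hμ).trans (mul_le_mul hfμ hgμ (hg _) (hf _))
  · exact hlb.2.trans (mul_le_mul hfxinf hgxinf (hg _) (hf _))

/-- Abstract uncertainty principle (Theorem 1): with a curve of Lagrangian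
minimizers `xs : [0,∞) → S` extended by a limit point `xinf` (the point `x*_∞`),
every element of `S` satisfies the product lower bound `f x̂ · g x̂ ≥ h`, where
`h` is the attained infimum of the product along the curve. -/
theorem stmt_3 {S : Type*} (f g : S → ℝ) (xs : ℝ → S) (xinf : S)
    (hf : ∀ y : S, 0 ≤ f y) (hg : ∀ y : S, 0 ≤ g y)
    -- (i) Lagrangian optimality for every finite μ ≥ 0
    (hopt : ∀ μ : ℝ, 0 ≤ μ → ∀ y : S, f (xs μ) + μ * g (xs μ) ≤ f y + μ * g y)
    -- (ii) g(x*_∞) minimizes g over S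
    (hginf : ∀ y : S, g xinf ≤ g y)
    -- (iii) continuity of g along the curve on [0,∞], i.e. on [0,∞) and at ∞
    (hgcont : ContinuousOn (fun μ => g (xs μ)) (Set.Ici (0 : ℝ)))
    (hglim : Filter.Tendsto (fun μ => g (xs μ)) Filter.atTop (nhds (g xinf)))
    -- (iv) continuity of f along the curve on [0,∞], with f(x*_∞) the limit
    (hfcont : ContinuousOn (fun μ => f (xs μ)) (Set.Ici (0 : ℝ)))
    (hflim : Filter.Tendsto (fun μ => f (xs μ)) Filter.atTop (nhds (f xinf)))
    -- (v) the infimum h of the product over [0,∞] is attained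
    (h : ℝ)
    (hatt : (∃ μ : ℝ, 0 ≤ μ ∧ h = f (xs μ) * g (xs μ)) ∨ h = f xinf * g xinf)
    (hlb : (∀ μ : ℝ, 0 ≤ μ → h ≤ f (xs μ) * g (xs μ)) ∧ h ≤ f xinf * g xinf) :
    ∀ xhat : S, h ≤ f xhat * g xhat :=
  stmt_3_general f g xs xinf hf hg hopt hginf hgcont hglim hflim h hlb
end

section
/- Let Σ ⪰ 0 with largest eigenvalue at most ρ_max and smallest nonzero eigenvalue at least σ_min > 0, and let x(μ) = (I+2μΣ)⁻¹(a+μR) with limit x(∞). Then for all μ ≥ 0: |‖x(μ) − x(∞)‖²_Σ| ≤ max_i σᵢ/(1+2μσᵢ)² · ‖x(0) − x(∞)‖²₂ ≤ (1/(4μ²σ_min)) ‖x(0) − x(∞)‖²₂, so in particular ‖x(μ) − x(∞)‖²_Σ → 0 as μ → ∞ at rate O(1/μ²). -/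
/-!
In an orthonormal eigenbasis `U` of `Σ`, with `y = Uᵀ (x(0) - x(∞))`, the resolvent
`(I + 2μΣ)⁻¹` is diagonal, and on the range of `Σ` the coordinates of `x(μ) - x(∞)` are
`yᵢ / (1 + 2μσᵢ)`. Hence `‖x(μ) - x(∞)‖²_Σ = ∑ᵢ σᵢ / (1 + 2μσᵢ)² · yᵢ²`, while `‖y‖ = ‖x(0) - x(∞)‖`.
Each weight is at most `σᵢ / (2μσᵢ)² = 1 / (4μ²σᵢ) ≤ 1 / (4μ²σ_min)`.
-/

open Matrix Filter

section OrthogonalConjugation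

variable {ι α : Type*} [Fintype ι] [DecidableEq ι]

theorem Matrix.conj_diagonal_mulVec [CommSemiring α] (U : Matrix ι ι α) (f v : ι → α) :
    (U * diagonal f * Uᵀ) *ᵥ v = U *ᵥ (f * (Uᵀ *ᵥ v)) := by
  rw [← mulVec_mulVec, ← mulVec_mulVec, funext (mulVec_diagonal f (Uᵀ *ᵥ v))]
  rfl

theorem Matrix.transpose_mulVec_conj_diagonal_mulVec [CommSemiring α] {U : Matrix ι ι α}
    (hU : Uᵀ * U = 1) (f v : ι → α) :
    Uᵀ *ᵥ ((U * diagonal f * Uᵀ) *ᵥ v) = f * (Uᵀ *ᵥ v) := by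
  rw [conj_diagonal_mulVec, mulVec_mulVec, hU, one_mulVec]

theorem Matrix.dotProduct_conj_diagonal_mulVec [CommSemiring α] (U : Matrix ι ι α) (f v : ι → α) :
    v ⬝ᵥ (U * diagonal f * Uᵀ) *ᵥ v = ∑ i, f i * (Uᵀ *ᵥ v) i ^ 2 := by
  rw [conj_diagonal_mulVec, dotProduct_mulVec, ← mulVec_transpose, dotProduct_comm]
  simp only [dotProduct, Pi.mul_apply, sq, mul_assoc]

theorem Matrix.dotProduct_self_eq_sum_transpose_mulVec_sq [CommSemiring α] {U : Matrix ι ι α}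
    (hU : U * Uᵀ = 1) (v : ι → α) : v ⬝ᵥ v = ∑ i, (Uᵀ *ᵥ v) i ^ 2 := by
  simpa [hU] using dotProduct_conj_diagonal_mulVec U 1 v

theorem Matrix.inv_one_add_smul_conj_diagonal [Field α] {U : Matrix ι ι α}
    (hU : U * Uᵀ = 1) (hU' : Uᵀ * U = 1) {σ : ι → α} {t : α} (hσ : ∀ i, 1 + t * σ i ≠ 0) :
    (1 + t • (U * diagonal σ * Uᵀ))⁻¹ = U * diagonal (fun i => (1 + t * σ i)⁻¹) * Uᵀ := by
  have hconj : 1 + t • (U * diagonal σ * Uᵀ) = U * diagonal (fun i => 1 + t * σ i) * Uᵀ := by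
    rw [show diagonal (fun i => 1 + t * σ i) = 1 + t • diagonal σ by
      rw [← diagonal_one, ← diagonal_smul, ← diagonal_add]; rfl]
    rw [Matrix.mul_add, Matrix.add_mul, mul_one, hU, Matrix.mul_smul, Matrix.smul_mul]
  apply inv_eq_right_inv
  rw [hconj]
  simp only [mul_assoc]
  rw [← mul_assoc Uᵀ, hU', one_mul, ← mul_assoc (diagonal _), diagonal_mul_diagonal]
  simp [mul_inv_cancel₀ (hσ _), hU]

end OrthogonalConjugation

theorem Matrix.transpose_mulVec_resolvent_sub_limit {ι : Type*} [Fintype ι] [DecidableEq ι]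
    {U : Matrix ι ι ℝ} (hU : U * Uᵀ = 1) (hU' : Uᵀ * U = 1) {σ : ι → ℝ} (hσ : ∀ i, 0 ≤ σ i)
    (p : ι → Prop) [DecidablePred p] (a R : ι → ℝ) {μ : ℝ} (hμ : 0 ≤ μ) :
    Uᵀ *ᵥ ((1 + (2 * μ) • (U * diagonal σ * Uᵀ))⁻¹ *ᵥ (a + μ • R) -
      ((1 / 2 : ℝ) • (U * diagonal (fun i => if p i then (σ i)⁻¹ else 0) * Uᵀ) *ᵥ R +
        U *ᵥ fun i => if p i then 0 else (Uᵀ *ᵥ a) i)) = fun i =>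
      (1 + 2 * μ * σ i)⁻¹ * ((Uᵀ *ᵥ a) i + μ * (Uᵀ *ᵥ R) i) -
        if p i then (Uᵀ *ᵥ R) i / (2 * σ i) else (Uᵀ *ᵥ a) i := by
  have hd (i : ι) : 1 + 2 * μ * σ i ≠ 0 := by have := hσ i; positivity
  rw [inv_one_add_smul_conj_diagonal hU hU' hd]
  simp only [mulVec_sub, mulVec_add, mulVec_smul, transpose_mulVec_conj_diagonal_mulVec hU',
    mulVec_mulVec, hU', one_mulVec]
  ext i
  simp only [Pi.sub_apply, Pi.add_apply, Pi.smul_apply, Pi.mul_apply, smul_eq_mul]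
  split_ifs <;> ring

theorem div_one_add_two_mul_sq_le {m s μ : ℝ} (hm : 0 < m) (hms : m ≤ s) (hμ : 0 < μ) :
    s / (1 + 2 * μ * s) ^ 2 ≤ 1 / (4 * μ ^ 2 * m) := by
  have hs : 0 < s := hm.trans_le hms
  calc s / (1 + 2 * μ * s) ^ 2 ≤ s / (2 * μ * s) ^ 2 := by gcongr; linarith
    _ = 1 / (4 * μ ^ 2 * s) := by field_simp; ring
    _ ≤ 1 / (4 * μ ^ 2 * m) := by gcongr

/-- Off the range of `Σ` (`s = 0`) the coordinate of `x(μ) - x(∞)` grows like `μ`; only the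
weight `s` makes it vanish. -/
theorem mul_sq_sub_limit_eq {p : Prop} [Decidable p] {s μ b c : ℝ} (hp : p → 0 < s)
    (hnp : ¬p → s = 0) (hμ : 0 ≤ μ) :
    s * ((1 + 2 * μ * s)⁻¹ * (b + μ * c) - if p then c / (2 * s) else b) ^ 2 =
      (if p then s / (1 + 2 * μ * s) ^ 2 else 0) * (b - if p then c / (2 * s) else b) ^ 2 := by
  split_ifs with h
  · have hs := hp h
    have : 0 < 1 + 2 * μ * s := by positivity
    field_simp
    ring
  · simp [hnp h]

theorem Finset.sum_mul_sq_le_mul_sum_sq {ι : Type*} (s : Finset ι) {w z : ι → ℝ} {B : ℝ}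
    (hw : ∀ i ∈ s, w i ≤ B) :
    ∑ i ∈ s, w i * z i ^ 2 ≤ B * ∑ i ∈ s, z i ^ 2 := by
  rw [mul_sum]
  exact sum_le_sum fun i hi => mul_le_mul_of_nonneg_right (hw i hi) (sq_nonneg _)

theorem tendsto_zero_of_nonneg_of_le_div_sq {f : ℝ → ℝ} {K : ℝ} (h0 : ∀ᶠ μ in atTop, 0 ≤ f μ)
    (hle : ∀ᶠ μ in atTop, f μ ≤ K / μ ^ 2) : Tendsto f atTop (nhds 0) := by
  have : Tendsto (fun μ : ℝ => K / μ ^ 2) atTop (nhds 0) :=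
    tendsto_const_nhds.div_atTop (tendsto_pow_atTop two_ne_zero)
  exact tendsto_of_tendsto_of_tendsto_of_le_of_le' tendsto_const_nhds this h0 hle

theorem stmt_18_general (n r : ℕ)
    (U : Matrix (Fin n) (Fin n) ℝ)
    (hU : U * Uᵀ = 1) (hU' : Uᵀ * U = 1)
    (σ : Fin n → ℝ) (σmin ρmax : ℝ) (hσmin : 0 < σmin)
    (hσ : ∀ i : Fin n, (i : ℕ) < r → σmin ≤ σ i ∧ σ i ≤ ρmax)
    (hσzero : ∀ i : Fin n, ¬ (i : ℕ) < r → σ i = 0)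
    (Sig Sigdag : Matrix (Fin n) (Fin n) ℝ)
    (hSig : Sig = U * Matrix.diagonal σ * Uᵀ)
    (hSigdag : Sigdag = U * Matrix.diagonal
        (fun i : Fin n => if (i : ℕ) < r then (σ i)⁻¹ else 0) * Uᵀ)
    (a R : Fin n → ℝ)
    (x : ℝ → Fin n → ℝ)
    (hx : ∀ μ : ℝ, x μ = ((1 + (2 * μ) • Sig)⁻¹).mulVec (a + μ • R))
    (xinf : Fin n → ℝ)
    (hxinf : xinf = (1 / 2 : ℝ) • Sigdag.mulVec R +
        U.mulVec (fun i : Fin n => if (i : ℕ) < r then 0 else Uᵀ.mulVec a i)) :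
    (∀ μ : ℝ, 0 ≤ μ →
      (x μ - xinf) ⬝ᵥ Sig.mulVec (x μ - xinf) ≤
        (⨆ i : Fin n, if (i : ℕ) < r then σ i / (1 + 2 * μ * σ i) ^ 2 else 0) *
          ((x 0 - xinf) ⬝ᵥ (x 0 - xinf))) ∧
    (∀ μ : ℝ, 0 < μ →
      (x μ - xinf) ⬝ᵥ Sig.mulVec (x μ - xinf) ≤
        1 / (4 * μ ^ 2 * σmin) * ((x 0 - xinf) ⬝ᵥ (x 0 - xinf))) ∧
    Tendsto (fun μ : ℝ => (x μ - xinf) ⬝ᵥ Sig.mulVec (x μ - xinf))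
      atTop (nhds 0) := by
  subst hSig hSigdag
  have hσpos (i : Fin n) (hi : (i : ℕ) < r) : 0 < σ i := hσmin.trans_le (hσ i hi).1
  have hσnn (i : Fin n) : 0 ≤ σ i := by
    by_cases hi : (i : ℕ) < r
    exacts [(hσpos i hi).le, (hσzero i hi).ge]
  have hQ (μ : ℝ) (hμ : 0 ≤ μ) : (x μ - xinf) ⬝ᵥ (U * diagonal σ * Uᵀ) *ᵥ (x μ - xinf) =
      ∑ i : Fin n, (if (i : ℕ) < r then σ i / (1 + 2 * μ * σ i) ^ 2 else 0) *
        (Uᵀ *ᵥ (x 0 - xinf)) i ^ 2 := by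
    rw [dotProduct_conj_diagonal_mulVec, hx, hx, hxinf,
      transpose_mulVec_resolvent_sub_limit hU hU' hσnn _ a R hμ,
      transpose_mulVec_resolvent_sub_limit hU hU' hσnn _ a R le_rfl]
    refine Finset.sum_congr rfl fun i _ => ?_
    simpa using mul_sq_sub_limit_eq (hσpos i) (hσzero i) hμ
  have hnorm := dotProduct_self_eq_sum_transpose_mulVec_sq hU (x 0 - xinf)
  have hrate (μ : ℝ) (hμ : 0 < μ) : (x μ - xinf) ⬝ᵥ (U * diagonal σ * Uᵀ) *ᵥ (x μ - xinf) ≤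
      1 / (4 * μ ^ 2 * σmin) * ((x 0 - xinf) ⬝ᵥ (x 0 - xinf)) := by
    rw [hQ μ hμ.le, hnorm]
    refine Finset.univ.sum_mul_sq_le_mul_sum_sq fun i _ => ?_
    split_ifs with hi
    exacts [div_one_add_two_mul_sq_le hσmin (hσ i hi).1 hμ, by positivity]
  refine ⟨fun μ hμ => ?_, hrate, ?_⟩
  · rw [hQ μ hμ, hnorm]
    exact Finset.univ.sum_mul_sq_le_mul_sum_sq fun i _ =>
      le_ciSup (f := fun i : Fin n => if (i : ℕ) < r then σ i / (1 + 2 * μ * σ i) ^ 2 else 0)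
        (Set.finite_range _).bddAbove i
  refine tendsto_zero_of_nonneg_of_le_div_sq (K := ((x 0 - xinf) ⬝ᵥ (x 0 - xinf)) / (4 * σmin))
    (.of_forall fun μ => ?_) ((eventually_gt_atTop 0).mono fun μ hμ => (hrate μ hμ).trans_eq ?_)
  · rw [dotProduct_conj_diagonal_mulVec]
    exact Finset.sum_nonneg fun i _ => mul_nonneg (hσnn i) (sq_nonneg _)
  · field_simp

/-- Decay of the `Σ`-weighted quadratic form along the curve
`x(μ) = (I + 2μΣ)⁻¹(a + μR)`: the weighted norm `‖x(μ) − x(∞)‖²_Σ` is bounded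
by `max_i σᵢ/(1+2μσᵢ)² · ‖x(0) − x(∞)‖²` and, for `μ > 0`, by
`‖x(0) − x(∞)‖²/(4μ²σ_min)`; in particular it tends to `0` as `μ → ∞`. -/
theorem stmt_18 (n r : ℕ) (hn : 0 < n) (hr : r ≤ n)
    (U : Matrix (Fin n) (Fin n) ℝ)
    (hU : U * Uᵀ = 1) (hU' : Uᵀ * U = 1)
    (σ : Fin n → ℝ) (σmin ρmax : ℝ) (hσmin : 0 < σmin)
    (hσ : ∀ i : Fin n, (i : ℕ) < r → σmin ≤ σ i ∧ σ i ≤ ρmax)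
    (hσzero : ∀ i : Fin n, ¬ (i : ℕ) < r → σ i = 0)
    (Sig Sigdag : Matrix (Fin n) (Fin n) ℝ)
    (hSig : Sig = U * Matrix.diagonal σ * Uᵀ)
    (hSigdag : Sigdag = U * Matrix.diagonal
        (fun i : Fin n => if (i : ℕ) < r then (σ i)⁻¹ else 0) * Uᵀ)
    (a R : Fin n → ℝ)
    (x : ℝ → Fin n → ℝ)
    (hx : ∀ μ : ℝ, x μ = ((1 + (2 * μ) • Sig)⁻¹).mulVec (a + μ • R))
    (xinf : Fin n → ℝ)
    (hxinf : xinf = (1 / 2 : ℝ) • Sigdag.mulVec R +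
        U.mulVec (fun i : Fin n => if (i : ℕ) < r then 0 else Uᵀ.mulVec a i)) :
    (∀ μ : ℝ, 0 ≤ μ →
      (x μ - xinf) ⬝ᵥ Sig.mulVec (x μ - xinf) ≤
        (⨆ i : Fin n, if (i : ℕ) < r then σ i / (1 + 2 * μ * σ i) ^ 2 else 0) *
          ((x 0 - xinf) ⬝ᵥ (x 0 - xinf))) ∧
    (∀ μ : ℝ, 0 < μ →
      (x μ - xinf) ⬝ᵥ Sig.mulVec (x μ - xinf) ≤
        1 / (4 * μ ^ 2 * σmin) * ((x 0 - xinf) ⬝ᵥ (x 0 - xinf))) ∧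
    Tendsto (fun μ : ℝ => (x μ - xinf) ⬝ᵥ Sig.mulVec (x μ - xinf))
      atTop (nhds 0) :=
  stmt_18_general n r U hU hU' σ σmin ρmax hσmin hσ hσzero Sig Sigdag hSig hSigdag a R x hx xinf
    hxinf
end
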